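/- Dynamic Gradual Guarantee (Proposition 3): let e₁ and e₂ be well-typed closed GS expressions with e₁ ⊑ e₂ (e₁ is more precise than e₂). If e₁ evaluates to a value v₁ (i.e., its elaboration reduces in GSCheck to v₁), then e₂ evaluates to a value v₂ with v₁ ⊑ v₂. -/

import Mathlib

open Classical

noncomputable section

namespace GS

/-! ## Base types, constants, primitive operations -/

/-- Base types. -/
inductive BaseTy where
  | real
  | bool
deriving DecidableEq

/-- Constants (literal values of base types). -/
inductive Const where
  | r : ℝ → Const
  | b : Bool → Const

/-- Primitive (binary) operations. -/
inductive Op where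
  | add
  | mul
  | le

/-! ## Gradual sensitivities: sensitivity intervals -/

/-- A gradual sensitivity: a valid interval `[lo,hi]` with `0 ≤ lo ≤ hi ≤ ∞`
over the extended nonnegative reals. The unknown sensitivity `?` is `[0,∞]`
and a fully precise sensitivity `s` is `[s,s]`. -/
structure SI where
  lo : ENNReal
  hi : ENNReal
  isle : lo ≤ hi

/-- Interval addition. -/
def SI.add (a b : SI) : SI := ⟨a.lo + b.lo, a.hi + b.hi, add_le_add a.isle b.isle⟩

/-- Interval multiplication. -/
def SI.mul (a b : SI) : SI := ⟨a.lo * b.lo, a.hi * b.hi, mul_le_mul' a.isle b.isle⟩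

/-- Interval join. -/
def SI.join (a b : SI) : SI := ⟨a.lo ⊔ b.lo, a.hi ⊔ b.hi, sup_le_sup a.isle b.isle⟩

/-- Precision on gradual sensitivities: interval inclusion. -/
def SI.prec (a b : SI) : Prop := b.lo ≤ a.lo ∧ a.hi ≤ b.hi

/-- Consistent sensitivity ordering: `[s₁,s₂] ⪅ [s₃,s₄]` iff `s₁ ≤ s₄`. -/
def SI.cle (a b : SI) : Prop := a.lo ≤ b.hi

/-- A gradual sensitivity is bounded if it does not contain ∞. -/
def SI.bounded (a : SI) : Prop := a.hi ≠ ⊤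

/-- A gradual sensitivity is static (fully precise) if it is a singleton. -/
def SI.static (a : SI) : Prop := a.lo = a.hi

/-- The zero sensitivity. -/
def SI.zero : SI := ⟨0, 0, le_rfl⟩

/-- The infinite sensitivity. -/
def SI.inf : SI := ⟨⊤, ⊤, le_rfl⟩

/-- The unknown sensitivity `? = [0,∞]`. -/
def SI.unknown : SI := ⟨0, ⊤, le_top⟩

/-! ## Gradual sensitivity environments -/

/-- A gradual sensitivity environment: a map from distance variables to
gradual sensitivities. -/
abbrev GEnv := String → SI

/-- Pointwise addition of sensitivity environments. -/
def addE (S1 S2 : GEnv) : GEnv := fun x => (S1 x).add (S2 x)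

/-- Scaling of a sensitivity environment by a gradual sensitivity. -/
def scaleE (g : SI) (S : GEnv) : GEnv := fun x => g.mul (S x)

/-- The empty sensitivity environment ∅. -/
def zeroE : GEnv := fun _ => SI.zero

/-- Pointwise precision of sensitivity environments. -/
def precE (S1 S2 : GEnv) : Prop := ∀ x, (S1 x).prec (S2 x)

/-- A sensitivity environment is bounded if no interval contains ∞. -/
def boundedE (S : GEnv) : Prop := ∀ x, (S x).bounded

/-- Substitution [Sr/r]S of a sensitivity environment for a distance
variable in a sensitivity environment. -/
def substDVE (r : String) (Sr : GEnv) (S : GEnv) : GEnv :=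
  fun y => (if y = r then SI.zero else S y).add ((S r).mul (Sr y))

/-! ## GS types -/

/-- GS types g; `arrow g₁ S₁ g₂ S₂` is the function type g₁^{S₁} → g₂^{S₂};
`all r g S` is the distance abstraction type ∀r. g^{S}. -/
inductive GTy where
  | base : BaseTy → GTy
  | arrow : GTy → GEnv → GTy → GEnv → GTy
  | all : String → GTy → GEnv → GTy

/-- Sensitivity types T = g^Σ. -/
abbrev CTy := GTy × GEnv

/-- Substitution [Sr/r] of a sensitivity environment for a distance variable
in a type (recursively in all nested sensitivity environments, respecting
the ∀-binder). -/
def substT (r : String) (Sr : GEnv) : GTy → GTy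
  | .base B => .base B
  | .arrow g1 S1 g2 S2 =>
      .arrow (substT r Sr g1) (substDVE r Sr S1) (substT r Sr g2) (substDVE r Sr S2)
  | .all r' g S =>
      if r' = r then .all r' g S
      else .all r' (substT r Sr g) (substDVE r Sr S)

/-- Size of a type (used for termination of the logical relations). -/
def GTy.size : GTy → ℕ
  | .base _ => 1
  | .arrow g1 _ g2 _ => g1.size + g2.size + 1
  | .all _ g _ => g.size + 1

theorem size_substT (r : String) (Sr : GEnv) (g : GTy) :
    (substT r Sr g).size = g.size := by
  induction g with
  | base B => rfl
  | arrow g1 S1 g2 S2 ih1 ih2 => simp [substT, GTy.size, ih1, ih2]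
  | all r' g S ih => by_cases h : r' = r <;> simp [substT, h, GTy.size, ih]

/-- Precision on GS types (covariant everywhere). -/
inductive TyPrec : GTy → GTy → Prop
  | base : TyPrec (.base B) (.base B)
  | arrow : TyPrec g1 g1' → precE S1 S1' → TyPrec g2 g2' → precE S2 S2' →
      TyPrec (.arrow g1 S1 g2 S2) (.arrow g1' S1' g2' S2')
  | all : TyPrec g g' → precE S S' →
      TyPrec (.all r g S) (.all r g' S')

/-- Precision on sensitivity types. -/
def CTyPrec (T T' : CTy) : Prop := TyPrec T.1 T'.1 ∧ precE T.2 T'.2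

/-! ## Evidence, interior and consistent transitivity -/

/-- An evidence for a consistent subtyping judgment: a pair of sensitivity
types. -/
abbrev Ev := CTy × CTy

/-- Evidence precision ⊑² (componentwise precision). -/
def EvPrec (ε ε' : Ev) : Prop := CTyPrec ε.1 ε'.1 ∧ CTyPrec ε.2 ε'.2

/-- Interior of two sensitivity environments (pointwise interior of the
consistent sensitivity ordering). -/
def interE (S1 S2 : GEnv) : Option (GEnv × GEnv) :=
  if h : ∀ x, (S1 x).lo ≤ (S2 x).hi then
    some (fun x => ⟨(S1 x).lo, (S1 x).hi ⊓ (S2 x).hi, le_inf (S1 x).isle (h x)⟩,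
          fun x => ⟨(S1 x).lo ⊔ (S2 x).lo, (S2 x).hi, sup_le (h x) (S2 x).isle⟩)
  else none

/-- Interior of two GS types (evidence for a consistent subtyping judgment,
contravariant in function domains). -/
def interT : GTy → GTy → Option (GTy × GTy)
  | .base B1, .base B2 => if B1 = B2 then some (.base B1, .base B2) else none
  | .arrow a1 sa1 b1 sb1, .arrow a2 sa2 b2 sb2 => do
      let (a2', a1') ← interT a2 a1
      let (sa2', sa1') ← interE sa2 sa1
      let (b1', b2') ← interT b1 b2
      let (sb1', sb2') ← interE sb1 sb2
      pure (.arrow a1' sa1' b1' sb1', .arrow a2' sa2' b2' sb2')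
  | .all r1 g1 s1, .all r2 g2 s2 =>
      if r1 = r2 then do
        let (g1', g2') ← interT g1 g2
        let (s1', s2') ← interE s1 s2
        pure (.all r1 g1' s1', .all r2 g2' s2')
      else none
  | _, _ => none
termination_by t1 t2 => t1.size + t2.size
decreasing_by all_goals simp [GTy.size] <;> omega

/-- Interior of two sensitivity types: the initial evidence for their
consistent subtyping judgment. -/
def interC (T1 T2 : CTy) : Option Ev := do
  let (g1, g2) ← interT T1.1 T2.1
  let (s1, s2) ← interE T1.2 T2.2
  pure ((g1, s1), (g2, s2))

/-- Consistent transitivity on (pointwise) sensitivity environments: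
combines evidences ⟨s1,s2⟩ and ⟨s3,s4⟩. -/
def ctrE (s1 s2 s3 s4 : GEnv) : Option (GEnv × GEnv) :=
  if h : ∀ x, (s1 x).lo ≤ (s1 x).hi ⊓ (s2 x).hi ⊓ (s3 x).hi ∧
              (s2 x).lo ⊔ (s3 x).lo ⊔ (s4 x).lo ≤ (s4 x).hi then
    some (fun x => ⟨(s1 x).lo, (s1 x).hi ⊓ (s2 x).hi ⊓ (s3 x).hi, (h x).1⟩,
          fun x => ⟨(s2 x).lo ⊔ (s3 x).lo ⊔ (s4 x).lo, (s4 x).hi, (h x).2⟩)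
  else none

/-- Consistent transitivity on GS types: combines evidences ⟨t1,t2⟩ and
⟨t3,t4⟩ (contravariant in function domains). -/
def ctrT : GTy → GTy → GTy → GTy → Option (GTy × GTy)
  | .base B1, .base B2, .base B3, .base B4 =>
      if B1 = B2 ∧ B2 = B3 ∧ B3 = B4 then some (.base B1, .base B4) else none
  | .arrow a1 sa1 b1 sb1, .arrow a2 sa2 b2 sb2,
    .arrow a3 sa3 b3 sb3, .arrow a4 sa4 b4 sb4 => do
      let (a4', a1') ← ctrT a4 a3 a2 a1
      let (sa4', sa1') ← ctrE sa4 sa3 sa2 sa1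
      let (b1', b4') ← ctrT b1 b2 b3 b4
      let (sb1', sb4') ← ctrE sb1 sb2 sb3 sb4
      pure (.arrow a1' sa1' b1' sb1', .arrow a4' sa4' b4' sb4')
  | .all r1 g1 s1, .all r2 g2 s2, .all r3 g3 s3, .all r4 g4 s4 =>
      if r1 = r2 ∧ r2 = r3 ∧ r3 = r4 then do
        let (g1', g4') ← ctrT g1 g2 g3 g4
        let (s1', s4') ← ctrE s1 s2 s3 s4
        pure (.all r1 g1' s1', .all r4 g4' s4')
      else none
  | _, _, _, _ => none
termination_by t1 t2 t3 t4 => t1.size + t2.size + t3.size + t4.size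
decreasing_by all_goals simp [GTy.size] <;> omega

/-- Consistent transitivity on evidences: ε₁ ∘ ε₂, undefined when transitivity
is refuted. -/
def ctrC (e1 e2 : Ev) : Option Ev := do
  let (g1, g4) ← ctrT e1.1.1 e1.2.1 e2.1.1 e2.2.1
  let (s1, s4) ← ctrE e1.1.2 e1.2.2 e2.1.2 e2.2.2
  pure ((g1, s1), (g4, s4))

/-! ## GSCheck: the internal evidence language -/

/-- GSCheck expressions: ascriptions `ascr ε e T` carry an evidence ε and an
ascribed sensitivity type T; `err` is the runtime error term. -/
inductive CExpr where
  | const : Const → CExpr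
  | op : Op → CExpr → CExpr → CExpr
  | var : String → CExpr
  | lam : String → CTy → CExpr → CExpr
  | app : CExpr → CExpr → CExpr
  | tlam : String → CExpr → CExpr
  | tapp : CExpr → GEnv → CExpr
  | ascr : Ev → CExpr → CTy → CExpr
  | err : CExpr

mutual
/-- Simple values u ::= c | λ(x:T).e | Λr.v. -/
inductive Simple : CExpr → Prop
  | const : Simple (.const c)
  | lam : Simple (.lam x T e)
  | tlam : IsVal v → Simple (.tlam r v)
/-- Values v ::= ε u :: T. -/
inductive IsVal : CExpr → Prop
  | mk : Simple u → IsVal (.ascr ε u T)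
end

/-- Term substitution. -/
def csubst (x : String) (v : CExpr) : CExpr → CExpr
  | .const c => .const c
  | .op o a b => .op o (csubst x v a) (csubst x v b)
  | .var y => if y = x then v else .var y
  | .lam y T e => if y = x then .lam y T e else .lam y T (csubst x v e)
  | .app a b => .app (csubst x v a) (csubst x v b)
  | .tlam r e => .tlam r (csubst x v e)
  | .tapp e S => .tapp (csubst x v e) S
  | .ascr ε e T => .ascr ε (csubst x v e) T
  | .err => .err

/-- Substitution of a distance variable in a sensitivity type. -/
def substCTy (r : String) (Sr : GEnv) (T : CTy) : CTy :=
  (substT r Sr T.1, substDVE r Sr T.2)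

/-- Substitution of a distance variable in an evidence. -/
def substEv (r : String) (Sr : GEnv) (ε : Ev) : Ev :=
  (substCTy r Sr ε.1, substCTy r Sr ε.2)

/-- Substitution of a distance variable in a GSCheck expression. -/
def dsubst (r : String) (Sr : GEnv) : CExpr → CExpr
  | .const c => .const c
  | .op o a b => .op o (dsubst r Sr a) (dsubst r Sr b)
  | .var y => .var y
  | .lam y T e => .lam y (substCTy r Sr T) (dsubst r Sr e)
  | .app a b => .app (dsubst r Sr a) (dsubst r Sr b)
  | .tlam r' e => if r' = r then .tlam r' e else .tlam r' (dsubst r Sr e)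
  | .tapp e S => .tapp (dsubst r Sr e) (substDVE r Sr S)
  | .ascr ε e T => .ascr (substEv r Sr ε) (dsubst r Sr e) (substCTy r Sr T)
  | .err => .err

/-- Denotation of the primitive operations. -/
def opDenote : Op → Const → Const → Option Const
  | .add, .r a, .r b => some (.r (a + b))
  | .mul, .r a, .r b => some (.r (a * b))
  | .le, .r a, .r b => some (.b (if a ≤ b then true else false))
  | _, _, _ => none

/-- Sensitivity typing of the primitive operations: addition adds the
sensitivity environments; multiplication and comparison scale by ∞. -/
def opCTy : Op → CTy → CTy → Option CTy
  | .add, (.base .real, S1), (.base .real, S2) => some (.base .real, addE S1 S2)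
  | .mul, (.base .real, S1), (.base .real, S2) =>
      some (.base .real, scaleE SI.inf (addE S1 S2))
  | .le, (.base .real, S1), (.base .real, S2) =>
      some (.base .bool, scaleE SI.inf (addE S1 S2))
  | _, _, _ => none

/-- Lifting of operation typing to evidences. -/
def opEv (o : Op) (ε1 ε2 : Ev) : Option Ev := do
  let a ← opCTy o ε1.1 ε2.1
  let b ← opCTy o ε1.2 ε2.2
  pure (a, b)

/-- Domain of a function sensitivity type. -/
def domC : CTy → Option CTy
  | (.arrow g1 S1 _ _, _) => some (g1, S1)
  | _ => none

/-- Codomain of a function sensitivity type (adding the function's own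
top-level sensitivity environment). -/
def codC : CTy → Option CTy
  | (.arrow _ _ g2 S2, S) => some (g2, addE S2 S)
  | _ => none

/-- Instantiation of a distance-abstraction sensitivity type. -/
def instC (T : CTy) (Sr : GEnv) : Option CTy :=
  match T with
  | (.all r g Sg, S) => some (substT r Sr g, addE (substDVE r Sr Sg) S)
  | _ => none

/-- Inversion of an evidence for the domain (contravariant). -/
def domEv (ε : Ev) : Option Ev := do
  let d2 ← domC ε.2
  let d1 ← domC ε.1
  pure (d2, d1)

/-- Inversion of an evidence for the codomain. -/
def codEv (ε : Ev) : Option Ev := do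
  let c1 ← codC ε.1
  let c2 ← codC ε.2
  pure (c1, c2)

/-- Inversion of an evidence for instantiation. -/
def instEv (ε : Ev) (Sr : GEnv) : Option Ev := do
  let i1 ← instC ε.1 Sr
  let i2 ← instC ε.2 Sr
  pure (i1, i2)

/-- Reduction of GSCheck (the notions of reduction of Figure 6 together with
the congruence closure under evaluation contexts and error propagation). -/
inductive Step : CExpr → CExpr → Prop
  | op : opDenote o c1 c2 = some c → opEv o ε1 ε2 = some ε → opCTy o T1 T2 = some T →
      Step (.op o (.ascr ε1 (.const c1) T1) (.ascr ε2 (.const c2) T2))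
           (.ascr ε (.const c) T)
  | appOk : Simple u → domEv ε = some εd → ctrC ε1 εd = some ε' →
      codEv ε = some εc → codC T = some Tc →
      Step (.app (.ascr ε (.lam x T1' eb) T) (.ascr ε1 u T1))
           (.ascr εc (csubst x (.ascr ε' u T1') eb) Tc)
  | appErr : Simple u → domEv ε = some εd → ctrC ε1 εd = none →
      Step (.app (.ascr ε (.lam x T1' eb) T) (.ascr ε1 u T1)) .err
  | inst : IsVal v → instEv ε Sr = some ε' → instC T Sr = some T' →
      Step (.tapp (.ascr ε (.tlam r v) T) Sr) (.ascr ε' (dsubst r Sr v) T')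
  | ascrOk : Simple u → ctrC ε' ε = some ε'' →
      Step (.ascr ε (.ascr ε' u T') T) (.ascr ε'' u T)
  | ascrErr : Simple u → ctrC ε' ε = none →
      Step (.ascr ε (.ascr ε' u T') T) .err
  -- congruence (evaluation contexts)
  | opL : Step e1 e1' → Step (.op o e1 e2) (.op o e1' e2)
  | opR : IsVal v → Step e2 e2' → Step (.op o v e2) (.op o v e2')
  | appL : Step e1 e1' → Step (.app e1 e2) (.app e1' e2)
  | appR : IsVal v → Step e2 e2' → Step (.app v e2) (.app v e2')
  | tappC : Step e e' → Step (.tapp e S) (.tapp e' S)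
  | tlamC : Step e e' → Step (.tlam r e) (.tlam r e')
  | ascrC : Step e e' → Step (.ascr ε e T) (.ascr ε e' T)
  -- error propagation
  | opLErr : Step (.op o .err e2) .err
  | opRErr : IsVal v → Step (.op o v .err) .err
  | appLErr : Step (.app .err e2) .err
  | appRErr : IsVal v → Step (.app v .err) .err
  | tappErr : Step (.tapp .err S) .err
  | tlamErr : Step (.tlam r .err) .err
  | ascrErrP : Step (.ascr ε .err T) .err

/-- Zero or more reduction steps. -/
def Steps : CExpr → CExpr → Prop := Relation.ReflTransGen Step

/-- e ⇓ v : e reduces to the value v. -/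
def EvalsTo (e v : CExpr) : Prop := Steps e v ∧ IsVal v

/-- e ⇓ error. -/
def EvalsErr (e : CExpr) : Prop := Steps e .err

/-- Applying a substitution γ (a value environment) to a GSCheck expression. -/
def cmsubst (γ : String → CExpr) : CExpr → CExpr
  | .const c => .const c
  | .op o a b => .op o (cmsubst γ a) (cmsubst γ b)
  | .var y => γ y
  | .lam y T e => .lam y T (cmsubst (Function.update γ y (.var y)) e)
  | .app a b => .app (cmsubst γ a) (cmsubst γ b)
  | .tlam r e => .tlam r (cmsubst γ e)
  | .tapp e S => .tapp (cmsubst γ e) S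
  | .ascr ε e T => .ascr ε (cmsubst γ e) T
  | .err => .err

/-! ## Monitors, distances, canonical forms -/

/-- The monitor of a value: its evidence. -/
def monOf : CExpr → Option Ev
  | .ascr ε _ _ => some ε
  | _ => none

/-- The monitored sensitivity of a value: the static environment of lower
bounds of the sensitivity environment of the right-hand component of its
evidence. -/
def msOf : CExpr → String → ENNReal
  | .ascr (_, (_, S')) _ _ => fun r => (S' r).lo
  | _ => fun _ => 0

/-- Equi-precise monitors (each is more precise than the other). -/
def EquiEv (v1 v2 : CExpr) : Prop :=
  ∃ ε1 ε2, monOf v1 = some ε1 ∧ monOf v2 = some ε2 ∧ EvPrec ε1 ε2 ∧ EvPrec ε2 ε1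

/-- Canonical forms of a base type. -/
def CanonC (B : BaseTy) (v : CExpr) : Prop :=
  match B, v with
  | .real, .ascr _ (.const (.r _)) _ => True
  | .bool, .ascr _ (.const (.b _)) _ => True
  | _, _ => False

/-- The metric d_B on canonical forms of base types. -/
def dBC (B : BaseTy) (v1 v2 : CExpr) : ENNReal :=
  match B, v1, v2 with
  | .real, .ascr _ (.const (.r a)) _, .ascr _ (.const (.r b)) _ =>
      ENNReal.ofReal |a - b|
  | .bool, .ascr _ (.const (.b a)) _, .ascr _ (.const (.b b)) _ =>
      if a = b then 0 else ⊤
  | _, _, _ => ⊤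

/-- Distance environments: maps from distance variables to distances. -/
abbrev DEnv := String → ENNReal

/-- A distance environment is bounded if it avoids ∞. -/
def boundedD (dl : DEnv) : Prop := ∀ r, dl r ≠ ⊤

/-- Σ·δ for a static (fully precise) sensitivity environment Σ. -/
def dot (S : String → ENNReal) (dl : DEnv) : ENNReal := ∑' r, S r * dl r

/-- A static environment Σ' is (pointwise) within the gradual environment Σ,
i.e. Σ' is a static environment more precise than Σ. -/
def staticPrec (S' : String → ENNReal) (S : GEnv) : Prop :=
  ∀ r, (S r).lo ≤ S' r ∧ S' r ≤ (S r).hi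

/-! ## Logical relations (Figure 4): termination-insensitive -/

/-- Value logical relation (v₁,v₂) ∈ V_δ⟦g^Σ⟧ (Figure 4); the computation
relation E is inlined in the arrow and ∀ cases. -/
def Vrel (dl : DEnv) : GTy → GEnv → CExpr → CExpr → Prop
  | .base B, _, v1, v2 =>
      CanonC B v1 ∧ CanonC B v2 ∧
      dBC B v1 v2 ≤ dot (fun r => msOf v1 r ⊔ msOf v2 r) dl
  | .arrow g1 S1 g2 S2, S, v1, v2 =>
      IsVal v1 ∧ IsVal v2 ∧
      ∀ v1' v2', Vrel dl g1 S1 v1' v2' →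
        ∀ w1 w2, EvalsTo (.app v1 v1') w1 → EvalsTo (.app v2 v2') w2 →
          Vrel dl g2 (addE S2 S) w1 w2
  | .all r g Sg, S, v1, v2 =>
      IsVal v1 ∧ IsVal v2 ∧
      ∀ Sr, ∀ w1 w2, EvalsTo (.tapp v1 Sr) w1 → EvalsTo (.tapp v2 Sr) w2 →
        Vrel dl (substT r Sr g) (addE (substDVE r Sr Sg) S) w1 w2
termination_by g _ _ _ => g.size
decreasing_by all_goals simp [GTy.size, size_substT] <;> omega

/-- Computation logical relation (e₁,e₂) ∈ E_δ⟦g^Σ⟧. -/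
def Erel (dl : DEnv) (g : GTy) (S : GEnv) (e1 e2 : CExpr) : Prop :=
  ∀ v1 v2, EvalsTo e1 v1 → EvalsTo e2 v2 → Vrel dl g S v1 v2

/-- Type environments. -/
abbrev GTEnv := String → Option CTy

/-- Related substitutions (γ₁,γ₂) ∈ G_δ⟦Γ⟧. -/
def Grel (dl : DEnv) (Γ : GTEnv) (γ1 γ2 : String → CExpr) : Prop :=
  ∀ x T, Γ x = some T → Vrel dl T.1 T.2 (γ1 x) (γ2 x)

/-- Semantic gradual sensitivity typing Γ ⊨ e : T. -/
def SemGTy (Γ : GTEnv) (e : CExpr) (T : CTy) : Prop :=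
  ∀ dl γ1 γ2, Grel dl Γ γ1 γ2 → Erel dl T.1 T.2 (cmsubst γ1 e) (cmsubst γ2 e)

/-! ## Logical relations (Figure 5): termination-sensitive -/

/-- Termination-sensitive value logical relation (v₁,v₂) ∈ Vᵗˢ_δ⟦g^Σ⟧
(Figure 5); the computation relation Eᵗˢ is inlined in the arrow and ∀
cases. -/
def VrelTS (dl : DEnv) : GTy → GEnv → CExpr → CExpr → Prop
  | .base B, _, v1, v2 =>
      EquiEv v1 v2 ∧ CanonC B v1 ∧ CanonC B v2 ∧
      dBC B v1 v2 ≤ dot (fun r => msOf v1 r ⊔ msOf v2 r) dl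
  | .arrow g1 S1 g2 S2, S, v1, v2 =>
      EquiEv v1 v2 ∧ IsVal v1 ∧ IsVal v2 ∧
      ∀ v1' v2', VrelTS dl g1 S1 v1' v2' →
        ∀ w1, EvalsTo (.app v1 v1') w1 →
          ∃ w2, EvalsTo (.app v2 v2') w2 ∧ VrelTS dl g2 (addE S2 S) w1 w2
  | .all r g Sg, S, v1, v2 =>
      EquiEv v1 v2 ∧ IsVal v1 ∧ IsVal v2 ∧
      ∀ Sr, boundedE Sr →
        ∀ w1, EvalsTo (.tapp v1 Sr) w1 →
          ∃ w2, EvalsTo (.tapp v2 Sr) w2 ∧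
            VrelTS dl (substT r Sr g) (addE (substDVE r Sr Sg) S) w1 w2
termination_by g _ _ _ => g.size
decreasing_by all_goals simp [GTy.size, size_substT] <;> omega

/-- Termination-sensitive computation logical relation. -/
def ErelTS (dl : DEnv) (g : GTy) (S : GEnv) (e1 e2 : CExpr) : Prop :=
  ∀ v1, EvalsTo e1 v1 → ∃ v2, EvalsTo e2 v2 ∧ VrelTS dl g S v1 v2

/-- Termination-sensitive related substitutions (γ₁,γ₂) ∈ Gᵗˢ_δ⟦Γ⟧ (requires
a bounded distance environment). -/
def GrelTS (dl : DEnv) (Γ : GTEnv) (γ1 γ2 : String → CExpr) : Prop :=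
  boundedD dl ∧ ∀ x T, Γ x = some T → VrelTS dl T.1 T.2 (γ1 x) (γ2 x)

/-- Termination-sensitive semantic gradual sensitivity typing Γ ⊨ᵗˢ e : g^Σ
(requires the top-level sensitivity environment to be bounded). -/
def SemGTyTS (Γ : GTEnv) (e : CExpr) (T : CTy) : Prop :=
  boundedE T.2 ∧
  ∀ dl γ1 γ2, GrelTS dl Γ γ1 γ2 → ErelTS dl T.1 T.2 (cmsubst γ1 e) (cmsubst γ2 e)

/-! ## Gradual metric preservation -/

/-- δ-proximity of two substitutions for a base-type environment Γ:
values are canonical forms at bounded distance as measured by the join of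
their monitored sensitivities. -/
def Proximate (dl : DEnv) (Γ : GTEnv) (γ1 γ2 : String → CExpr) : Prop :=
  ∀ x B S, Γ x = some (.base B, S) →
    CanonC B (γ1 x) ∧ CanonC B (γ2 x) ∧
    dBC B (γ1 x) (γ2 x) ≤ dot (fun r => msOf (γ1 x) r ⊔ msOf (γ2 x) r) dl

/-- Termination-sensitive δ-proximity: additionally δ is bounded and
corresponding values carry equi-precise evidences. -/
def ProximateTS (dl : DEnv) (Γ : GTEnv) (γ1 γ2 : String → CExpr) : Prop :=
  boundedD dl ∧
  ∀ x B S, Γ x = some (.base B, S) →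
    EquiEv (γ1 x) (γ2 x) ∧ CanonC B (γ1 x) ∧ CanonC B (γ2 x) ∧
    dBC B (γ1 x) (γ2 x) ≤ dot (fun r => msOf (γ1 x) r ⊔ msOf (γ2 x) r) dl

/-- Gradual metric preservation GMP(Γ, e, B, Σ). -/
def GMP (Γ : GTEnv) (e : CExpr) (B : BaseTy) (S : GEnv) : Prop :=
  ∀ dl γ1 γ2, Proximate dl Γ γ1 γ2 →
    ∀ v1 v2, EvalsTo (cmsubst γ1 e) v1 → EvalsTo (cmsubst γ2 e) v2 →
      ∃ S' : String → ENNReal, staticPrec S' S ∧ dBC B v1 v2 ≤ dot S' dl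

/-- Termination-sensitive gradual metric preservation GMPᵗˢ(Γ, e, B, Σ). -/
def GMPts (Γ : GTEnv) (e : CExpr) (B : BaseTy) (S : GEnv) : Prop :=
  ∀ dl γ1 γ2, ProximateTS dl Γ γ1 γ2 →
    ∀ v1, EvalsTo (cmsubst γ1 e) v1 →
      ∃ v2, EvalsTo (cmsubst γ2 e) v2 ∧
        ∃ S' : String → ENNReal, staticPrec S' S ∧ dBC B v1 v2 ≤ dot S' dl

/-! ## The source language GS and type-directed elaboration (Figure 7) -/

/-- GS source expressions. -/
inductive GExpr where
  | const : Const → GExpr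
  | op : Op → GExpr → GExpr → GExpr
  | var : String → GExpr
  | lam : String → CTy → GExpr → GExpr
  | app : GExpr → GExpr → GExpr
  | tlam : String → GExpr → GExpr
  | tapp : GExpr → GEnv → GExpr
  | ascr : GExpr → CTy → GExpr

/-- The base type of a constant. -/
def constBTy : Const → BaseTy
  | .r _ => .real
  | .b _ => .bool

/-- Type-directed elaboration Γ ⊢ e ⇝ e' : T from GS to GSCheck (Figure 7);
it doubles as the syntactic type system of GS. -/
inductive Elab : GTEnv → GExpr → CExpr → CTy → Prop
  | const : interC (.base (constBTy c), zeroE) (.base (constBTy c), zeroE) = some ε →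
      Elab Γ (.const c) (.ascr ε (.const c) (.base (constBTy c), zeroE))
        (.base (constBTy c), zeroE)
  | op : Elab Γ a a' Ta → Elab Γ b b' Tb → opCTy o Ta Tb = some T →
      Elab Γ (.op o a b) (.op o a' b') T
  | var : Γ x = some T → Elab Γ (.var x) (.var x) T
  | lam : Elab (Function.update Γ x (some T1)) e e' T2 →
      interC (.arrow T1.1 T1.2 T2.1 T2.2, zeroE) (.arrow T1.1 T1.2 T2.1 T2.2, zeroE)
        = some ε →
      Elab Γ (.lam x T1 e)
        (.ascr ε (.lam x T1 e') (.arrow T1.1 T1.2 T2.1 T2.2, zeroE))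
        (.arrow T1.1 T1.2 T2.1 T2.2, zeroE)
  | app : Elab Γ a a' Ta → Elab Γ b b' Tb →
      domC Ta = some Td → interC Tb Td = some ε2 → codC Ta = some Tc →
      Elab Γ (.app a b) (.app a' (.ascr ε2 b' Td)) Tc
  | tlam : Elab Γ e e' T →
      interC (.all r T.1 T.2, zeroE) (.all r T.1 T.2, zeroE) = some ε →
      Elab Γ (.tlam r e) (.ascr ε (.tlam r e') (.all r T.1 T.2, zeroE))
        (.all r T.1 T.2, zeroE)
  | tapp : Elab Γ e e' T → instC T Sr = some T' →
      Elab Γ (.tapp e Sr) (.tapp e' Sr) T'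
  | ascr : Elab Γ e e' T → interC T T' = some ε →
      Elab Γ (.ascr e T') (.ascr ε e' T') T'

/-- The empty type environment. -/
def emptyEnv : GTEnv := fun _ => none

/-! ## Precision on expressions -/

/-- Precision on GS source expressions (the natural syntactic lifting of type
precision to terms). -/
inductive GPrec : GExpr → GExpr → Prop
  | const : GPrec (.const c) (.const c)
  | op : GPrec a a' → GPrec b b' → GPrec (.op o a b) (.op o a' b')
  | var : GPrec (.var x) (.var x)
  | lam : CTyPrec T T' → GPrec e e' → GPrec (.lam x T e) (.lam x T' e')
  | app : GPrec a a' → GPrec b b' → GPrec (.app a b) (.app a' b')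
  | tlam : GPrec e e' → GPrec (.tlam r e) (.tlam r e')
  | tapp : GPrec e e' → precE S S' → GPrec (.tapp e S) (.tapp e' S')
  | ascr : GPrec e e' → CTyPrec T T' → GPrec (.ascr e T) (.ascr e' T')

/-- Precision on GSCheck expressions (including evidences). -/
inductive CPrec : CExpr → CExpr → Prop
  | const : CPrec (.const c) (.const c)
  | op : CPrec a a' → CPrec b b' → CPrec (.op o a b) (.op o a' b')
  | var : CPrec (.var x) (.var x)
  | lam : CTyPrec T T' → CPrec e e' → CPrec (.lam x T e) (.lam x T' e')
  | app : CPrec a a' → CPrec b b' → CPrec (.app a b) (.app a' b')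
  | tlam : CPrec e e' → CPrec (.tlam r e) (.tlam r e')
  | tapp : CPrec e e' → precE S S' → CPrec (.tapp e S) (.tapp e' S')
  | ascr : EvPrec ε ε' → CPrec e e' → CTyPrec T T' →
      CPrec (.ascr ε e T) (.ascr ε' e' T')
  | err : CPrec .err .err

end GS

/-! Precision is a simulation. Every meta-operation that elaboration and reduction use (interior,
consistent transitivity, domain, codomain and instantiation of types and evidences, typing of
primitive operations) is monotone for precision: if it is defined on the more precise arguments,
it is defined on the less precise ones, with a less precise result. Hence elaboration turns
`e₁ ⊑ e₂` into `e₁' ⊑ e₂'`, and every step of `e₁'` is matched by steps of `e₂'` that keep the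
precision relation, except a step to a term `E[err]`, since consistent transitivity may fail on the
more precise side alone. Such a term never reaches a value, so these steps do not occur on the way
from `e₁'` to `v₁`. -/
namespace GS

def OptLift {α β : Type*} (R : α → β → Prop) (o : Option α) (o' : Option β) : Prop :=
  ∀ a ∈ o, ∃ b ∈ o', R a b

namespace OptLift

universe u v

variable {α γ : Type u} {β δ : Type v} {R : α → β → Prop} {S : γ → δ → Prop}

theorem none_left (o' : Option β) : OptLift R none o' := fun _ h => nomatch h

theorem pure {a : α} {b : β} (h : R a b) : OptLift R (pure a) (pure b) := fun _ ha =>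
  ⟨b, rfl, Option.some.inj ha ▸ h⟩

theorem bind {o : Option α} {o' : Option β} {f : α → Option γ} {f' : β → Option δ}
    (h : OptLift R o o') (hf : ∀ a b, R a b → OptLift S (f a) (f' b)) :
    OptLift S (o >>= f) (o' >>= f') := by
  intro c hc
  obtain ⟨a, ha, hfa⟩ := Option.bind_eq_some_iff.1 hc
  obtain ⟨b, hb, hab⟩ := h a ha
  obtain ⟨d, hd, hcd⟩ := hf a b hab c hfa
  exact ⟨d, Option.bind_eq_some_iff.2 ⟨b, hb, hd⟩, hcd⟩

theorem rel {o : Option α} {o' : Option β} {a : α} {b : β} (h : OptLift R o o')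
    (ha : o = some a) (hb : o' = some b) : R a b := by
  obtain ⟨b', hb', hab⟩ := h a ha
  exact Option.some.inj (hb'.symm.trans hb) ▸ hab

end OptLift

theorem SI.prec_refl (a : SI) : a.prec a := ⟨le_rfl, le_rfl⟩

theorem precE_refl (S : GEnv) : precE S S := fun _ => SI.prec_refl _

theorem TyPrec.refl : ∀ g : GTy, TyPrec g g
  | .base _ => .base
  | .arrow g1 S1 g2 S2 => .arrow (refl g1) (precE_refl S1) (refl g2) (precE_refl S2)
  | .all _ g S => .all (refl g) (precE_refl S)

theorem CTyPrec.refl (T : CTy) : CTyPrec T T := ⟨TyPrec.refl _, precE_refl _⟩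

theorem SI.prec.add {a a' b b' : SI} (ha : a.prec a') (hb : b.prec b') :
    (a.add b).prec (a'.add b') :=
  ⟨add_le_add ha.1 hb.1, add_le_add ha.2 hb.2⟩

theorem SI.prec.mul {a a' b b' : SI} (ha : a.prec a') (hb : b.prec b') :
    (a.mul b).prec (a'.mul b') :=
  ⟨mul_le_mul' ha.1 hb.1, mul_le_mul' ha.2 hb.2⟩

theorem precE.add {S1 S1' S2 S2' : GEnv} (h1 : precE S1 S1') (h2 : precE S2 S2') :
    precE (addE S1 S2) (addE S1' S2') := fun x => (h1 x).add (h2 x)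

theorem precE.scale {S S' : GEnv} (g : SI) (h : precE S S') :
    precE (scaleE g S) (scaleE g S') := fun x => (SI.prec_refl g).mul (h x)

theorem precE.substDVE {r : String} {S S' Sr Sr' : GEnv} (h : precE S S') (hr : precE Sr Sr') :
    precE (substDVE r Sr S) (substDVE r Sr' S') := by
  intro y
  refine SI.prec.add ?_ ((h r).mul (hr y))
  split_ifs
  exacts [SI.prec_refl _, h y]

theorem TyPrec.substT {r : String} {Sr Sr' : GEnv} (hr : precE Sr Sr') {g g' : GTy}
    (h : TyPrec g g') : TyPrec (substT r Sr g) (substT r Sr' g') := by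
  induction h with
  | base => exact .base
  | arrow _ hS1 _ hS2 ih1 ih2 => exact .arrow ih1 (hS1.substDVE hr) ih2 (hS2.substDVE hr)
  | all h hS ih =>
    unfold GS.substT
    split_ifs
    exacts [.all h hS, .all ih (hS.substDVE hr)]

theorem CTyPrec.substCTy {r : String} {Sr Sr' : GEnv} (hr : precE Sr Sr') {T T' : CTy}
    (h : CTyPrec T T') : CTyPrec (substCTy r Sr T) (substCTy r Sr' T') :=
  ⟨h.1.substT hr, h.2.substDVE hr⟩

theorem EvPrec.substEv {r : String} {Sr Sr' : GEnv} (hr : precE Sr Sr') {ε ε' : Ev}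
    (h : EvPrec ε ε') : EvPrec (substEv r Sr ε) (substEv r Sr' ε') :=
  ⟨h.1.substCTy hr, h.2.substCTy hr⟩

theorem interE_mono {S1 S1' S2 S2' : GEnv} (h1 : precE S1 S1') (h2 : precE S2 S2') :
    OptLift (Prod.RProd precE precE) (interE S1 S2) (interE S1' S2') := by
  unfold interE
  by_cases hc : ∀ x, (S1 x).lo ≤ (S2 x).hi
  · have hc' : ∀ x, (S1' x).lo ≤ (S2' x).hi := fun x => ((h1 x).1.trans (hc x)).trans (h2 x).2
    rw [dif_pos hc, dif_pos hc']
    exact OptLift.pure ⟨fun x => ⟨(h1 x).1, inf_le_inf (h1 x).2 (h2 x).2⟩,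
      fun x => ⟨sup_le_sup (h1 x).1 (h2 x).1, (h2 x).2⟩⟩
  · rw [dif_neg hc]
    exact OptLift.none_left _

theorem interT_mono {t1 t2 t1' t2' : GTy} (h1 : TyPrec t1 t1') (h2 : TyPrec t2 t2') :
    OptLift (Prod.RProd TyPrec TyPrec) (interT t1 t2) (interT t1' t2') := by
  induction t1, t2 using interT.induct generalizing t1' t2' with
  | case1 =>
    cases h1; cases h2
    simp only [interT, if_true]
    exact OptLift.pure ⟨.base, .base⟩
  | case2 _ _ hne => simp only [interT, hne, if_false]; exact OptLift.none_left _
  | case3 _ _ _ _ _ _ _ _ iha ihb =>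
    cases h1 with | arrow ha1 hsa1 hb1 hsb1 =>
    cases h2 with | arrow ha2 hsa2 hb2 hsb2 =>
    rw [interT, interT]
    exact OptLift.bind (iha ha2 ha1) fun _ _ ⟨hx2, hx1⟩ =>
      OptLift.bind (interE_mono hsa2 hsa1) fun _ _ ⟨hy2, hy1⟩ =>
      OptLift.bind (ihb hb1 hb2) fun _ _ ⟨hz1, hz2⟩ =>
      OptLift.bind (interE_mono hsb1 hsb2) fun _ _ ⟨hw1, hw2⟩ =>
      OptLift.pure ⟨.arrow hx1 hy1 hz1 hw1, .arrow hx2 hy2 hz2 hw2⟩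
  | case4 _ _ _ _ _ ih =>
    cases h1 with | all hg1 hs1 =>
    cases h2 with | all hg2 hs2 =>
    simp only [interT, if_true]
    exact OptLift.bind (ih hg1 hg2) fun _ _ ⟨hx1, hx2⟩ =>
      OptLift.bind (interE_mono hs1 hs2) fun _ _ ⟨hy1, hy2⟩ =>
      OptLift.pure ⟨.all hx1 hy1, .all hx2 hy2⟩
  | case5 _ _ _ _ _ _ hne => simp only [interT, hne, if_false]; exact OptLift.none_left _
  | case6 x y hb ha hl => rw [interT.eq_4 x y hb ha hl]; exact OptLift.none_left _

theorem interC_mono {T1 T2 T1' T2' : CTy} (h1 : CTyPrec T1 T1') (h2 : CTyPrec T2 T2') :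
    OptLift EvPrec (interC T1 T2) (interC T1' T2') :=
  OptLift.bind (interT_mono h1.1 h2.1) fun _ _ ⟨hg1, hg2⟩ =>
    OptLift.bind (interE_mono h1.2 h2.2) fun _ _ ⟨hs1, hs2⟩ => OptLift.pure ⟨⟨hg1, hs1⟩, hg2, hs2⟩

theorem ctrE_mono {s1 s2 s3 s4 s1' s2' s3' s4' : GEnv} (h1 : precE s1 s1') (h2 : precE s2 s2')
    (h3 : precE s3 s3') (h4 : precE s4 s4') :
    OptLift (Prod.RProd precE precE) (ctrE s1 s2 s3 s4) (ctrE s1' s2' s3' s4') := by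
  have hinf : ∀ x, (s1 x).hi ⊓ (s2 x).hi ⊓ (s3 x).hi ≤ (s1' x).hi ⊓ (s2' x).hi ⊓ (s3' x).hi :=
    fun x => inf_le_inf (inf_le_inf (h1 x).2 (h2 x).2) (h3 x).2
  have hsup : ∀ x, (s2' x).lo ⊔ (s3' x).lo ⊔ (s4' x).lo ≤ (s2 x).lo ⊔ (s3 x).lo ⊔ (s4 x).lo :=
    fun x => sup_le_sup (sup_le_sup (h2 x).1 (h3 x).1) (h4 x).1
  unfold ctrE
  by_cases hc : ∀ x, (s1 x).lo ≤ (s1 x).hi ⊓ (s2 x).hi ⊓ (s3 x).hi ∧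
      (s2 x).lo ⊔ (s3 x).lo ⊔ (s4 x).lo ≤ (s4 x).hi
  · have hc' : ∀ x, (s1' x).lo ≤ (s1' x).hi ⊓ (s2' x).hi ⊓ (s3' x).hi ∧
        (s2' x).lo ⊔ (s3' x).lo ⊔ (s4' x).lo ≤ (s4' x).hi := fun x =>
      ⟨((h1 x).1.trans (hc x).1).trans (hinf x), ((hsup x).trans (hc x).2).trans (h4 x).2⟩
    rw [dif_pos hc, dif_pos hc']
    exact OptLift.pure ⟨fun x => ⟨(h1 x).1, hinf x⟩, fun x => ⟨hsup x, (h4 x).2⟩⟩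
  · rw [dif_neg hc]
    exact OptLift.none_left _

theorem ctrT_mono {t1 t2 t3 t4 t1' t2' t3' t4' : GTy} (h1 : TyPrec t1 t1') (h2 : TyPrec t2 t2')
    (h3 : TyPrec t3 t3') (h4 : TyPrec t4 t4') :
    OptLift (Prod.RProd TyPrec TyPrec) (ctrT t1 t2 t3 t4) (ctrT t1' t2' t3' t4') := by
  induction t1, t2, t3, t4 using ctrT.induct generalizing t1' t2' t3' t4' with
  | case1 _ _ _ _ hB =>
    cases h1; cases h2; cases h3; cases h4
    simp only [ctrT, hB, and_self, if_true]
    exact OptLift.pure ⟨.base, .base⟩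
  | case2 _ _ _ _ hB => simp only [ctrT, hB, if_false]; exact OptLift.none_left _
  | case3 _ _ _ _ _ _ _ _ _ _ _ _ _ _ _ _ iha ihb =>
    cases h1 with | arrow ha1 hsa1 hb1 hsb1 =>
    cases h2 with | arrow ha2 hsa2 hb2 hsb2 =>
    cases h3 with | arrow ha3 hsa3 hb3 hsb3 =>
    cases h4 with | arrow ha4 hsa4 hb4 hsb4 =>
    rw [ctrT, ctrT]
    exact OptLift.bind (iha ha4 ha3 ha2 ha1) fun _ _ ⟨hx4, hx1⟩ =>
      OptLift.bind (ctrE_mono hsa4 hsa3 hsa2 hsa1) fun _ _ ⟨hy4, hy1⟩ =>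
      OptLift.bind (ihb hb1 hb2 hb3 hb4) fun _ _ ⟨hz1, hz4⟩ =>
      OptLift.bind (ctrE_mono hsb1 hsb2 hsb3 hsb4) fun _ _ ⟨hw1, hw4⟩ =>
      OptLift.pure ⟨.arrow hx1 hy1 hz1 hw1, .arrow hx4 hy4 hz4 hw4⟩
  | case4 _ _ _ _ _ _ _ _ _ _ _ _ hr ih =>
    obtain ⟨rfl, rfl, rfl⟩ := hr
    cases h1 with | all hg1 hs1 =>
    cases h2 with | all hg2 hs2 =>
    cases h3 with | all hg3 hs3 =>
    cases h4 with | all hg4 hs4 =>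
    simp only [ctrT, and_self, if_true]
    exact OptLift.bind (ih hg1 hg2 hg3 hg4) fun _ _ ⟨hx1, hx4⟩ =>
      OptLift.bind (ctrE_mono hs1 hs2 hs3 hs4) fun _ _ ⟨hy1, hy4⟩ =>
      OptLift.pure ⟨.all hx1 hy1, .all hx4 hy4⟩
  | case5 _ _ _ _ _ _ _ _ _ _ _ _ hr => simp only [ctrT, hr, if_false]; exact OptLift.none_left _
  | case6 x y z w hb ha hl => rw [ctrT.eq_4 x y z w hb ha hl]; exact OptLift.none_left _

theorem ctrC_mono {ε1 ε2 ε1' ε2' : Ev} (h1 : EvPrec ε1 ε1') (h2 : EvPrec ε2 ε2') :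
    OptLift EvPrec (ctrC ε1 ε2) (ctrC ε1' ε2') :=
  OptLift.bind (ctrT_mono h1.1.1 h1.2.1 h2.1.1 h2.2.1) fun _ _ ⟨hg1, hg4⟩ =>
    OptLift.bind (ctrE_mono h1.1.2 h1.2.2 h2.1.2 h2.2.2) fun _ _ ⟨hs1, hs4⟩ =>
    OptLift.pure ⟨⟨hg1, hs1⟩, hg4, hs4⟩

theorem domC_mono {T T' : CTy} (h : CTyPrec T T') : OptLift CTyPrec (domC T) (domC T') := by
  obtain ⟨g, S⟩ := T
  obtain ⟨g', S'⟩ := T'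
  obtain ⟨hg, -⟩ := h
  cases hg with
  | arrow hg1 hS1 _ _ => exact OptLift.pure ⟨hg1, hS1⟩
  | _ => exact OptLift.none_left _

theorem codC_mono {T T' : CTy} (h : CTyPrec T T') : OptLift CTyPrec (codC T) (codC T') := by
  obtain ⟨g, S⟩ := T
  obtain ⟨g', S'⟩ := T'
  obtain ⟨hg, hS⟩ := h
  cases hg with
  | arrow _ _ hg2 hS2 => exact OptLift.pure ⟨hg2, hS2.add hS⟩
  | _ => exact OptLift.none_left _

theorem instC_mono {T T' : CTy} {Sr Sr' : GEnv} (h : CTyPrec T T') (hr : precE Sr Sr') :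
    OptLift CTyPrec (instC T Sr) (instC T' Sr') := by
  obtain ⟨g, S⟩ := T
  obtain ⟨g', S'⟩ := T'
  obtain ⟨hg, hS⟩ := h
  cases hg with
  | all hg hSg => exact OptLift.pure ⟨hg.substT hr, (hSg.substDVE hr).add hS⟩
  | _ => exact OptLift.none_left _

theorem domEv_mono {ε ε' : Ev} (h : EvPrec ε ε') : OptLift EvPrec (domEv ε) (domEv ε') :=
  OptLift.bind (domC_mono h.2) fun _ _ h2 =>
    OptLift.bind (domC_mono h.1) fun _ _ h1 => OptLift.pure ⟨h2, h1⟩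

theorem codEv_mono {ε ε' : Ev} (h : EvPrec ε ε') : OptLift EvPrec (codEv ε) (codEv ε') :=
  OptLift.bind (codC_mono h.1) fun _ _ h1 =>
    OptLift.bind (codC_mono h.2) fun _ _ h2 => OptLift.pure ⟨h1, h2⟩

theorem instEv_mono {ε ε' : Ev} {Sr Sr' : GEnv} (h : EvPrec ε ε') (hr : precE Sr Sr') :
    OptLift EvPrec (instEv ε Sr) (instEv ε' Sr') :=
  OptLift.bind (instC_mono h.1 hr) fun _ _ h1 =>
    OptLift.bind (instC_mono h.2 hr) fun _ _ h2 => OptLift.pure ⟨h1, h2⟩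

theorem opCTy_mono (o : Op) {Ta Tb Ta' Tb' : CTy} (ha : CTyPrec Ta Ta') (hb : CTyPrec Tb Tb') :
    OptLift CTyPrec (opCTy o Ta Tb) (opCTy o Ta' Tb') := by
  obtain ⟨ga, Sa⟩ := Ta
  obtain ⟨ga', Sa'⟩ := Ta'
  obtain ⟨gb, Sb⟩ := Tb
  obtain ⟨gb', Sb'⟩ := Tb'
  obtain ⟨hga, hSa⟩ := ha
  obtain ⟨hgb, hSb⟩ := hb
  cases hga with
  | @base Ba =>
    cases hgb with
    | @base Bb =>
      cases o <;> cases Ba <;> cases Bb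
      all_goals first
        | exact OptLift.none_left _
        | exact OptLift.pure ⟨.base, hSa.add hSb⟩
        | exact OptLift.pure ⟨.base, (hSa.add hSb).scale _⟩
    | _ => cases o <;> cases Ba <;> exact OptLift.none_left _
  | _ => cases o <;> exact OptLift.none_left _

theorem opEv_mono (o : Op) {ε1 ε2 ε1' ε2' : Ev} (h1 : EvPrec ε1 ε1') (h2 : EvPrec ε2 ε2') :
    OptLift EvPrec (opEv o ε1 ε2) (opEv o ε1' ε2') :=
  OptLift.bind (opCTy_mono o h1.1 h2.1) fun _ _ ha =>
    OptLift.bind (opCTy_mono o h1.2 h2.2) fun _ _ hb => OptLift.pure ⟨ha, hb⟩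

theorem CPrec.csubst {x : String} {v v' : CExpr} (hv : CPrec v v') {e e' : CExpr}
    (h : CPrec e e') : CPrec (csubst x v e) (csubst x v' e') := by
  induction h with
  | const => exact .const
  | op _ _ iha ihb => exact .op iha ihb
  | var =>
    unfold GS.csubst
    split_ifs
    exacts [hv, .var]
  | lam hT he ih =>
    unfold GS.csubst
    split_ifs
    exacts [.lam hT he, .lam hT ih]
  | app _ _ iha ihb => exact .app iha ihb
  | tlam _ ih => exact .tlam ih
  | tapp _ hS ih => exact .tapp ih hS
  | ascr hε _ hT ih => exact .ascr hε ih hT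
  | err => exact .err

theorem CPrec.dsubst {r : String} {Sr Sr' : GEnv} (hr : precE Sr Sr') {e e' : CExpr}
    (h : CPrec e e') : CPrec (dsubst r Sr e) (dsubst r Sr' e') := by
  induction h with
  | const => exact .const
  | op _ _ iha ihb => exact .op iha ihb
  | var => exact .var
  | lam hT _ ih => exact .lam (hT.substCTy hr) ih
  | app _ _ iha ihb => exact .app iha ihb
  | tlam he ih =>
    unfold GS.dsubst
    split_ifs
    exacts [.tlam he, .tlam ih]
  | tapp _ hS ih => exact .tapp ih (hS.substDVE hr)
  | ascr hε _ hT ih => exact .ascr (hε.substEv hr) ih (hT.substCTy hr)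
  | err => exact .err

mutual

theorem CPrec.simple {u u' : CExpr} : CPrec u u' → Simple u → Simple u'
  | .const, _ => .const
  | .lam _ _, _ => .lam
  | .tlam h, .tlam hv => .tlam (h.isVal hv)

theorem CPrec.isVal {v v' : CExpr} : CPrec v v' → IsVal v → IsVal v'
  | .ascr _ h _, .mk hu => .mk (h.simple hu)

end

/-- `e = E[err]` for an evaluation context `E`. -/
inductive ErrInCtx : CExpr → Prop
  | err : ErrInCtx .err
  | opL : ErrInCtx e1 → ErrInCtx (.op o e1 e2)
  | opR : IsVal v → ErrInCtx e2 → ErrInCtx (.op o v e2)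
  | appL : ErrInCtx e1 → ErrInCtx (.app e1 e2)
  | appR : IsVal v → ErrInCtx e2 → ErrInCtx (.app v e2)
  | tapp : ErrInCtx e → ErrInCtx (.tapp e S)
  | tlam : ErrInCtx e → ErrInCtx (.tlam r e)
  | ascr : ErrInCtx e → ErrInCtx (.ascr ε e T)

mutual

theorem ErrInCtx.not_simple {e : CExpr} : ErrInCtx e → ¬ Simple e
  | .tlam h, .tlam hv => h.not_isVal hv

theorem ErrInCtx.not_isVal {e : CExpr} : ErrInCtx e → ¬ IsVal e
  | .ascr h, .mk hu => h.not_simple hu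

end

mutual

theorem Step.not_simple {e e' : CExpr} : Step e e' → ¬ Simple e
  | .tlamC h, .tlam hv => h.not_isVal hv

theorem Step.not_isVal {e e' : CExpr} : Step e e' → ¬ IsVal e
  | .ascrC h, .mk hu => h.not_simple hu

end

theorem ErrInCtx.step {e e' : CExpr} (hs : Step e e') (h : ErrInCtx e) : ErrInCtx e' := by
  induction hs with
  | op => cases h <;> rename_i h <;> exact absurd (.mk .const) h.not_isVal
  | appOk hu =>
    cases h with
    | appL h => exact absurd (.mk .lam) h.not_isVal
    | appR _ h => exact absurd (.mk hu) h.not_isVal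
  | inst hv => cases h with | tapp h => exact absurd (.mk (.tlam hv)) h.not_isVal
  | ascrOk hu => cases h with | ascr h => exact absurd (.mk hu) h.not_isVal
  | appErr | ascrErr | opLErr | opRErr | appLErr | appRErr | tappErr | tlamErr | ascrErrP =>
    exact .err
  | opL hs ih =>
    cases h with
    | opL h => exact .opL (ih h)
    | opR hv _ => exact absurd hv hs.not_isVal
  | opR hv _ ih =>
    cases h with
    | opL h => exact absurd hv h.not_isVal
    | opR hv' h => exact .opR hv' (ih h)
  | appL hs ih =>
    cases h with
    | appL h => exact .appL (ih h)
    | appR hv _ => exact absurd hv hs.not_isVal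
  | appR hv _ ih =>
    cases h with
    | appL h => exact absurd hv h.not_isVal
    | appR hv' h => exact .appR hv' (ih h)
  | tappC _ ih => cases h with | tapp h => exact .tapp (ih h)
  | tlamC _ ih => cases h with | tlam h => exact .tlam (ih h)
  | ascrC _ ih => cases h with | ascr h => exact .ascr (ih h)

theorem ErrInCtx.steps {e e' : CExpr} (hs : Steps e e') (h : ErrInCtx e) : ErrInCtx e' := by
  induction hs with
  | refl => exact h
  | tail _ hstep ih => exact ih.step hstep

section StepsCongr

variable {a a' : CExpr}

theorem Steps.op_left (o : Op) (b : CExpr) (h : Steps a a') : Steps (.op o a b) (.op o a' b) :=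
  Relation.ReflTransGen.lift (CExpr.op o · b) (fun _ _ => Step.opL) _ _ h

theorem Steps.op_right (o : Op) {v : CExpr} (hv : IsVal v) (h : Steps a a') :
    Steps (.op o v a) (.op o v a') :=
  Relation.ReflTransGen.lift (CExpr.op o v ·) (fun _ _ => Step.opR hv) _ _ h

theorem Steps.app_left (b : CExpr) (h : Steps a a') : Steps (.app a b) (.app a' b) :=
  Relation.ReflTransGen.lift (CExpr.app · b) (fun _ _ => Step.appL) _ _ h

theorem Steps.app_right {v : CExpr} (hv : IsVal v) (h : Steps a a') :
    Steps (.app v a) (.app v a') :=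
  Relation.ReflTransGen.lift (CExpr.app v ·) (fun _ _ => Step.appR hv) _ _ h

theorem Steps.tapp (S : GEnv) (h : Steps a a') : Steps (.tapp a S) (.tapp a' S) :=
  Relation.ReflTransGen.lift (CExpr.tapp · S) (fun _ _ => Step.tappC) _ _ h

theorem Steps.tlam (r : String) (h : Steps a a') : Steps (.tlam r a) (.tlam r a') :=
  Relation.ReflTransGen.lift (CExpr.tlam r ·) (fun _ _ => Step.tlamC) _ _ h

theorem Steps.ascr (ε : Ev) (T : CTy) (h : Steps a a') : Steps (.ascr ε a T) (.ascr ε a' T) :=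
  Relation.ReflTransGen.lift (CExpr.ascr ε · T) (fun _ _ => Step.ascrC) _ _ h

end StepsCongr

theorem Step.simulation {c1 d1 : CExpr} (hs : Step c1 d1) {c2 : CExpr} (hp : CPrec c1 c2) :
    ErrInCtx d1 ∨ ∃ d2, Steps c2 d2 ∧ CPrec d1 d2 := by
  induction hs generalizing c2 with
  | op hden hEv hTy =>
    cases hp with | op hA hB =>
    cases hA with | ascr hε1 hc1 hT1 =>
    cases hB with | ascr hε2 hc2 hT2 =>
    cases hc1; cases hc2
    obtain ⟨ε', hε', hpε⟩ := opEv_mono _ hε1 hε2 _ hEv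
    obtain ⟨T', hT', hpT⟩ := opCTy_mono _ hT1 hT2 _ hTy
    exact .inr ⟨_, .single (.op hden hε' hT'), .ascr hpε .const hpT⟩
  | appOk hu hd hc hcod hcodC =>
    cases hp with | app hF hA =>
    cases hF with | ascr hε hlam hT =>
    cases hlam with | lam hT1' heb =>
    cases hA with | ascr hε1 hu' hT1 =>
    obtain ⟨εd', hd', hpd⟩ := domEv_mono hε _ hd
    obtain ⟨ε', hc', hpc⟩ := ctrC_mono hε1 hpd _ hc
    obtain ⟨εc', hcod', hpcod⟩ := codEv_mono hε _ hcod
    obtain ⟨Tc', hcodC', hpTc⟩ := codC_mono hT _ hcodC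
    exact .inr ⟨_, .single (.appOk (hu'.simple hu) hd' hc' hcod' hcodC'),
      .ascr hpcod ((CPrec.ascr hpc hu' hT1').csubst heb) hpTc⟩
  | inst hv hiE hiC =>
    cases hp with | tapp hF hSr =>
    cases hF with | ascr hε htl hT =>
    cases htl with | tlam hv' =>
    obtain ⟨ε', hiE', hpε⟩ := instEv_mono hε hSr _ hiE
    obtain ⟨T', hiC', hpT⟩ := instC_mono hT hSr _ hiC
    exact .inr ⟨_, .single (.inst (hv'.isVal hv) hiE' hiC'), .ascr hpε (hv'.dsubst hSr) hpT⟩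
  | ascrOk hu hc =>
    cases hp with | ascr hε hA hT =>
    cases hA with | ascr hε' hu' _ =>
    obtain ⟨ε'', hc', hpε⟩ := ctrC_mono hε' hε _ hc
    exact .inr ⟨_, .single (.ascrOk (hu'.simple hu) hc'), .ascr hpε hu' hT⟩
  | appErr | ascrErr | opLErr | opRErr | appLErr | appRErr | tappErr | tlamErr | ascrErrP =>
    exact Or.inl ErrInCtx.err
  | opL _ ih =>
    cases hp with | op hA hB =>
    exact (ih hA).imp .opL fun ⟨_, hs, hp⟩ => ⟨_, hs.op_left _ _, .op hp hB⟩
  | opR hv _ ih =>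
    cases hp with | op hA hB =>
    exact (ih hB).imp (.opR hv) fun ⟨_, hs, hp⟩ => ⟨_, hs.op_right _ (hA.isVal hv), .op hA hp⟩
  | appL _ ih =>
    cases hp with | app hA hB =>
    exact (ih hA).imp .appL fun ⟨_, hs, hp⟩ => ⟨_, hs.app_left _, .app hp hB⟩
  | appR hv _ ih =>
    cases hp with | app hA hB =>
    exact (ih hB).imp (.appR hv) fun ⟨_, hs, hp⟩ => ⟨_, hs.app_right (hA.isVal hv), .app hA hp⟩
  | tappC _ ih =>
    cases hp with | tapp hA hS =>
    exact (ih hA).imp .tapp fun ⟨_, hs, hp⟩ => ⟨_, hs.tapp _, .tapp hp hS⟩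
  | tlamC _ ih =>
    cases hp with | tlam hA =>
    exact (ih hA).imp .tlam fun ⟨_, hs, hp⟩ => ⟨_, hs.tlam _, .tlam hp⟩
  | ascrC _ ih =>
    cases hp with | ascr hε hA hT =>
    exact (ih hA).imp .ascr fun ⟨_, hs, hp⟩ => ⟨_, hs.ascr _ _, .ascr hε hp hT⟩

theorem CPrec.evalsTo {c1 c2 v1 : CExpr} (hp : CPrec c1 c2) (h : EvalsTo c1 v1) :
    ∃ v2, EvalsTo c2 v2 ∧ CPrec v1 v2 := by
  obtain ⟨hs, hv⟩ := h
  induction hs using Relation.ReflTransGen.head_induction_on generalizing c2 with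
  | refl => exact ⟨c2, ⟨.refl, hp.isVal hv⟩, hp⟩
  | head hstep hrest ih =>
    rcases hstep.simulation hp with herr | ⟨c2', hs2, hp'⟩
    · exact absurd hv (herr.steps hrest).not_isVal
    · obtain ⟨v2, ⟨hs2', hv2⟩, hpv⟩ := ih hp'
      exact ⟨v2, ⟨hs2.trans hs2', hv2⟩, hpv⟩

def GTEnvPrec (Γ Γ' : GTEnv) : Prop :=
  ∀ x T, Γ x = some T → ∃ T', Γ' x = some T' ∧ CTyPrec T T'

theorem GTEnvPrec.refl (Γ : GTEnv) : GTEnvPrec Γ Γ := fun _ T h => ⟨T, h, .refl T⟩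

theorem GTEnvPrec.update {Γ Γ' : GTEnv} (h : GTEnvPrec Γ Γ') (x : String) {T T' : CTy}
    (hT : CTyPrec T T') :
    GTEnvPrec (Function.update Γ x (some T)) (Function.update Γ' x (some T')) := by
  intro y U hy
  by_cases hxy : y = x
  · subst hxy
    simp only [Function.update_self, Option.some.injEq] at hy ⊢
    exact ⟨T', rfl, hy ▸ hT⟩
  · simp only [Function.update_of_ne hxy] at hy ⊢
    exact h y U hy

theorem Elab.prec {Γ : GTEnv} {e : GExpr} {c : CExpr} {T : CTy} (h : Elab Γ e c T)
    {Γ' : GTEnv} {e' : GExpr} {c' : CExpr} {T' : CTy} (hΓ : GTEnvPrec Γ Γ') (hp : GPrec e e')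
    (h' : Elab Γ' e' c' T') : CPrec c c' ∧ CTyPrec T T' := by
  induction h generalizing Γ' e' c' T' with
  | const hi =>
    cases hp
    cases h' with | const hi' =>
    exact ⟨.ascr ((interC_mono (.refl _) (.refl _)).rel hi hi') .const (.refl _), .refl _⟩
  | op _ _ hT iha ihb =>
    cases hp with | op hpa hpb =>
    cases h' with | op ha' hb' hT' =>
    obtain ⟨hca, hTa⟩ := iha hΓ hpa ha'
    obtain ⟨hcb, hTb⟩ := ihb hΓ hpb hb'
    exact ⟨.op hca hcb, (opCTy_mono _ hTa hTb).rel hT hT'⟩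
  | var hx =>
    cases hp
    cases h' with | var hx' =>
    obtain ⟨_, hx'', hT⟩ := hΓ _ _ hx
    exact ⟨.var, Option.some.inj (hx''.symm.trans hx') ▸ hT⟩
  | lam _ hi ih =>
    cases hp with | lam hT1 hpe =>
    cases h' with | lam he' hi' =>
    obtain ⟨hce, hT2⟩ := ih (hΓ.update _ hT1) hpe he'
    have hA : CTyPrec (.arrow _ _ _ _, zeroE) (.arrow _ _ _ _, zeroE) :=
      ⟨.arrow hT1.1 hT1.2 hT2.1 hT2.2, precE_refl zeroE⟩
    exact ⟨.ascr ((interC_mono hA hA).rel hi hi') (.lam hT1 hce) hA, hA⟩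
  | app _ _ hd hi hc iha ihb =>
    cases hp with | app hpa hpb =>
    cases h' with | app ha' hb' hd' hi' hc' =>
    obtain ⟨hca, hTa⟩ := iha hΓ hpa ha'
    obtain ⟨hcb, hTb⟩ := ihb hΓ hpb hb'
    have hTd := (domC_mono hTa).rel hd hd'
    exact ⟨.app hca (.ascr ((interC_mono hTb hTd).rel hi hi') hcb hTd),
      (codC_mono hTa).rel hc hc'⟩
  | @tlam _ _ _ _ r _ _ hi ih =>
    cases hp with | tlam hpe =>
    cases h' with | tlam he' hi' =>
    obtain ⟨hce, hT⟩ := ih hΓ hpe he'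
    have hA : CTyPrec (.all r _ _, zeroE) (.all r _ _, zeroE) := ⟨.all hT.1 hT.2, precE_refl zeroE⟩
    exact ⟨.ascr ((interC_mono hA hA).rel hi hi') (.tlam hce) hA, hA⟩
  | tapp _ hi ih =>
    cases hp with | tapp hpe hSr =>
    cases h' with | tapp he' hi' =>
    obtain ⟨hce, hT⟩ := ih hΓ hpe he'
    exact ⟨.tapp hce hSr, (instC_mono hT hSr).rel hi hi'⟩
  | ascr _ hi ih =>
    cases hp with | ascr hpe hT' =>
    cases h' with | ascr he' hi' =>
    obtain ⟨hce, hT⟩ := ih hΓ hpe he'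
    exact ⟨.ascr ((interC_mono hT hT').rel hi hi') hce hT', hT'⟩

end GS

open GS in
/-- Dynamic Gradual Guarantee (Proposition 3): if e₁ ⊑ e₂ are well-typed
closed GS expressions and e₁ evaluates (via its elaboration) to a value v₁,
then e₂ evaluates to a value v₂ with v₁ ⊑ v₂. -/
theorem dynamic_gradual_guarantee
    (e1 e2 : GExpr) (hp : GPrec e1 e2)
    (e1' e2' : CExpr) (T1 T2 : CTy)
    (h1 : Elab emptyEnv e1 e1' T1) (h2 : Elab emptyEnv e2 e2' T2)
    (v1 : CExpr) (hv1 : EvalsTo e1' v1) :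
    ∃ v2, EvalsTo e2' v2 ∧ CPrec v1 v2 :=
  (h1.prec (.refl emptyEnv) hp h2).1.evalsTo hv1
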